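/- Let L_1 and L_2 be layers on n channels such that L_1 is maximal. Then there exist a layer S on n channels and a permutation π of {1,…,n} such that outputs(L_1;S) ⊆ π(outputs(L_1;L_2)) and the two-layer network L_1;S is saturated. -/

import Mathlib

/-!
Among the layers `T` such that `outputs(L1;T)` embeds into `outputs(L1;L2)` up to a permutation
of channels, take one minimising (number of outputs, number of comparators) lexicographically.
Erasing a comparator of the second layer without changing the outputs up to permutation, or
adding one that shrinks them, would give a smaller such layer. Erasing a first-layer comparator
that the second layer repeats leaves the outputs unchanged while shrinking the second layer;
erasing one that it does not repeat strictly enlarges the output set, so the result cannot be a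
permutation of it.
-/

namespace SN

open scoped Classical

/-- A comparator on `n` channels: a pair of channels. -/
abbrev Comp (n : ℕ) := Fin n × Fin n

/-- A layer is a finite set of comparators. -/
abbrev Layer (n : ℕ) := Finset (Comp n)

/-- A comparator network is a sequence (list) of layers; its depth is the length. -/
abbrev Net (n : ℕ) := List (Layer n)

/-- Each channel is used by at most one comparator of the layer. -/
def NoOverlap {n : ℕ} (L : Layer n) : Prop :=
  ∀ c ∈ L, ∀ c' ∈ L, c ≠ c' →
    c.1 ≠ c'.1 ∧ c.1 ≠ c'.2 ∧ c.2 ≠ c'.1 ∧ c.2 ≠ c'.2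

/-- A (standard) layer: comparators `(i,j)` with `i < j`, channels pairwise disjoint. -/
def IsLayer {n : ℕ} (L : Layer n) : Prop :=
  (∀ c ∈ L, c.1 < c.2) ∧ NoOverlap L

/-- A generalized layer: comparators `(i,j)` with `i ≠ j` allowed in any order. -/
def IsGenLayer {n : ℕ} (L : Layer n) : Prop :=
  (∀ c ∈ L, c.1 ≠ c.2) ∧ NoOverlap L

def IsNet {n : ℕ} (C : Net n) : Prop := ∀ L ∈ C, IsLayer L

def IsGenNet {n : ℕ} (C : Net n) : Prop := ∀ L ∈ C, IsGenLayer L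

/-- Apply one layer to a Boolean vector: a comparator `(i,j)` puts the min
(`&&`) on channel `i` and the max (`||`) on channel `j`. -/
noncomputable def applyLayer {n : ℕ} (L : Layer n) (x : Fin n → Bool) : Fin n → Bool :=
  fun k =>
    if h1 : ∃ c ∈ L, c.1 = k then x h1.choose.1 && x h1.choose.2
    else if h2 : ∃ c ∈ L, c.2 = k then x h2.choose.1 || x h2.choose.2
    else x k

/-- Run a comparator network on a Boolean input (layers applied in sequence). -/
noncomputable def run {n : ℕ} (C : Net n) (x : Fin n → Bool) : Fin n → Bool :=
  C.foldl (fun y L => applyLayer L y) x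

/-- Ascendingly sorted Boolean vector. -/
def BSorted {n : ℕ} (x : Fin n → Bool) : Prop :=
  ∀ i j : Fin n, i ≤ j → x i ≤ x j

/-- A sorting network: a comparator network sorting every Boolean input. -/
def IsSortingNet {n : ℕ} (C : Net n) : Prop :=
  IsNet C ∧ ∀ x : Fin n → Bool, BSorted (run C x)

/-- The set of outputs of a network on all Boolean inputs. -/
def outputs {n : ℕ} (C : Net n) : Set (Fin n → Bool) := Set.range (run C)

/-- Apply one layer to a vector of naturals. -/
noncomputable def applyLayerN {n : ℕ} (L : Layer n) (x : Fin n → ℕ) : Fin n → ℕ :=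
  fun k =>
    if h1 : ∃ c ∈ L, c.1 = k then min (x h1.choose.1) (x h1.choose.2)
    else if h2 : ∃ c ∈ L, c.2 = k then max (x h2.choose.1) (x h2.choose.2)
    else x k

noncomputable def runN {n : ℕ} (C : Net n) (x : Fin n → ℕ) : Fin n → ℕ :=
  C.foldl (fun y L => applyLayerN L y) x

def NSorted {n : ℕ} (x : Fin n → ℕ) : Prop :=
  ∀ i j : Fin n, i ≤ j → x i ≤ x j

/-- Permute the coordinates of a Boolean vector by `π` (channel `k`'s value
moves to channel `π k`). -/
def permVec {n : ℕ} (π : Equiv.Perm (Fin n)) (x : Fin n → Bool) : Fin n → Bool :=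
  fun i => x (π.symm i)

/-- The image of a set of Boolean vectors under coordinate permutation by `π`. -/
def permSet {n : ℕ} (π : Equiv.Perm (Fin n)) (X : Set (Fin n → Bool)) :
    Set (Fin n → Bool) :=
  permVec π '' X

/-- The image `π(L)` of a layer under a permutation of channels. -/
def permLayer {n : ℕ} (π : Equiv.Perm (Fin n)) (L : Layer n) : Layer n :=
  L.image fun c => (π c.1, π c.2)

/-- Channel `i` is used by some comparator of the layer `L`. -/
def usedIn {n : ℕ} (L : Layer n) (i : Fin n) : Prop := ∃ c ∈ L, c.1 = i ∨ c.2 = i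

/-- Channels `i` and `j` are joined by a comparator of `L`. -/
def Joined {n : ℕ} (L : Layer n) (i j : Fin n) : Prop := (i, j) ∈ L ∨ (j, i) ∈ L

/-- `i` is the smaller channel of some comparator of `L` (a min-channel). -/
def MinChan {n : ℕ} (L : Layer n) (i : Fin n) : Prop := ∃ c ∈ L, c.1 = i

/-- `i` is the larger channel of some comparator of `L` (a max-channel). -/
def MaxChan {n : ℕ} (L : Layer n) (i : Fin n) : Prop := ∃ c ∈ L, c.2 = i

/-- A two-layer network `[L1, L2]` is redundant if some comparator can be removed
so that the outputs of the result are a permutation of the original outputs. -/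
def Redundant {n : ℕ} (L1 L2 : Layer n) : Prop :=
  ∃ π : Equiv.Perm (Fin n),
    (∃ c ∈ L1, outputs [L1.erase c, L2] = permSet π (outputs [L1, L2])) ∨
    (∃ c ∈ L2, outputs [L1, L2.erase c] = permSet π (outputs [L1, L2]))

/-- A two-layer network `[L1, L2]` is saturated if it is non-redundant and no
comparator on two channels unused in the second layer can be added to the second
layer so as to make the output set a proper subset of a permutation of the
original output set. -/
def Saturated {n : ℕ} (L1 L2 : Layer n) : Prop :=
  ¬ Redundant L1 L2 ∧
  ¬ ∃ (c : Comp n) (π : Equiv.Perm (Fin n)),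
      c.1 < c.2 ∧ ¬ usedIn L2 c.1 ∧ ¬ usedIn L2 c.2 ∧
      outputs [L1, insert c L2] ⊂ permSet π (outputs [L1, L2])

/-- Vertices of the graph representation of `C`: the comparators of `C`,
tagged with the index of the layer containing them. -/
def Vertex {n : ℕ} (C : Net n) := {p : ℕ × Comp n // p.2 ∈ C.getD p.1 ∅}

/-- The channel carrying the min output (`b = false`, label 1) or max output
(`b = true`, label 2) of a comparator. -/
def outChan {n : ℕ} (c : Comp n) (b : Bool) : Fin n := if b then c.2 else c.1

/-- An edge with label `b` (1 for min, 2 for max) from comparator `u` to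
comparator `v`: the corresponding output of `u` is an input of `v`, i.e. `v`
is the next comparator on that channel. -/
def Edge {n : ℕ} (C : Net n) (b : Bool) (u v : ℕ × Comp n) : Prop :=
  u.1 < v.1 ∧ (outChan u.2 b = v.2.1 ∨ outChan u.2 b = v.2.2) ∧
  ∀ m, u.1 < m → m < v.1 → ¬ usedIn (C.getD m ∅) (outChan u.2 b)

/-- The graph representations of `C` and `D` are isomorphic: a bijection of
comparators preserving the labeled edges. -/
def GraphIso {n m : ℕ} (C : Net n) (D : Net m) : Prop :=
  ∃ f : Vertex C ≃ Vertex D,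
    ∀ (b : Bool) (u v : Vertex C),
      Edge C b u.val v.val ↔ Edge D b (f u).val (f v).val

/-- The graph representation of `C` is connected. -/
def GraphConnected {n : ℕ} (C : Net n) : Prop :=
  ∀ u v : Vertex C,
    Relation.ReflTransGen
      (fun a b : Vertex C => ∃ ℓ : Bool, Edge C ℓ a.val b.val ∨ Edge C ℓ b.val a.val) u v

/-- Reflection of a comparator: `(i,j) ↦ (n-j+1, n-i+1)` (in 1-based terms). -/
def reflectComp {n : ℕ} (c : Comp n) : Comp n := (c.2.rev, c.1.rev)

def reflectLayer {n : ℕ} (L : Layer n) : Layer n := L.image reflectComp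

/-- Reflection `C^R` of a comparator network. -/
def reflect {n : ℕ} (C : Net n) : Net n := C.map reflectLayer

/-- The first layer `F_n = {(2i-1, 2i) : 1 ≤ i ≤ ⌊n/2⌋}` (0-indexed: `(2i, 2i+1)`). -/
def FLayer (n : ℕ) : Layer n :=
  Finset.univ.filter fun c : Comp n => c.1.val % 2 = 0 ∧ c.2.val = c.1.val + 1

/-- The two-layer networks with first layer `F_n`, parametrized by second layer. -/
def SecondLayers (n : ℕ) := {L : Layer n // IsLayer L}

/-- The number `|R(G_n)|` of equivalence classes of two-layer networks with
first layer `F_n`, under graph isomorphism `≈`. -/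
noncomputable def numClasses (n : ℕ) : ℕ :=
  Nat.card (Quot fun L L' : SecondLayers n =>
    GraphIso ([FLayer n, L.val] : Net n) ([FLayer n, L'.val] : Net n))

/-- Redundant two-layer networks with first layer `F_n`. -/
def RedLayers (n : ℕ) := {L : Layer n // IsLayer L ∧ Redundant (FLayer n) L}

/-- The number of equivalence classes of redundant two-layer networks with
first layer `F_n`, under graph isomorphism `≈`. -/
noncomputable def numRedClasses (n : ℕ) : ℕ :=
  Nat.card (Quot fun L L' : RedLayers n =>
    GraphIso ([FLayer n, L.val] : Net n) ([FLayer n, L'.val] : Net n))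

variable {n : ℕ}

def SortedOn (L : Layer n) (y : Fin n → Bool) : Prop := ∀ c ∈ L, y c.1 ≤ y c.2

def block (S : Layer n) (m : Fin n) : Set (Fin n) := {p | p = m ∨ Joined S m p}

namespace IsLayer

variable {L : Layer n}

lemma mono (hL : IsLayer L) {M : Layer n} (hM : M ⊆ L) : IsLayer M :=
  ⟨fun c hc => hL.1 c (hM hc), fun c hc c' hc' => hL.2 c (hM hc) c' (hM hc')⟩

lemma eq_of_touch (hL : IsLayer L) {d d' : Comp n} (hd : d ∈ L) (hd' : d' ∈ L) {k : Fin n}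
    (h : d.1 = k ∨ d.2 = k) (h' : d'.1 = k ∨ d'.2 = k) : d = d' := by
  by_contra hne
  obtain ⟨h11, h12, h21, h22⟩ := hL.2 d hd d' hd' hne
  rcases h with rfl | rfl <;> rcases h' with h' | h' <;> simp_all

lemma fst_ne_snd (hL : IsLayer L) {d : Comp n} (hd : d ∈ L) : d.1 ≠ d.2 :=
  (hL.1 d hd).ne

lemma insert (hL : IsLayer L) {c : Comp n} (hc : c.1 < c.2) (h1 : ¬ usedIn L c.1)
    (h2 : ¬ usedIn L c.2) : IsLayer (insert c L) := by
  refine ⟨fun e he => ?_, fun e he e' he' hne => ?_⟩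
  · rcases Finset.mem_insert.mp he with rfl | he
    exacts [hc, hL.1 e he]
  · simp only [usedIn, not_exists, not_and, not_or] at h1 h2
    rcases Finset.mem_insert.mp he with rfl | he <;>
      rcases Finset.mem_insert.mp he' with rfl | he'
    · exact absurd rfl hne
    · grind
    · grind
    · exact hL.2 e he e' he' hne

end IsLayer

section applyLayer

variable {L : Layer n}

lemma applyLayer_fst (hL : IsLayer L) {d : Comp n} (hd : d ∈ L) (x : Fin n → Bool) :
    applyLayer L x d.1 = (x d.1 && x d.2) := by
  have h : ∃ c ∈ L, c.1 = d.1 := ⟨d, hd, rfl⟩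
  rw [applyLayer, dif_pos h,
    hL.eq_of_touch h.choose_spec.1 hd (Or.inl h.choose_spec.2) (Or.inl rfl)]

lemma applyLayer_snd (hL : IsLayer L) {d : Comp n} (hd : d ∈ L) (x : Fin n → Bool) :
    applyLayer L x d.2 = (x d.1 || x d.2) := by
  have h1 : ¬ ∃ c ∈ L, c.1 = d.2 := by
    rintro ⟨c, hc, he⟩
    obtain rfl := hL.eq_of_touch hc hd (Or.inl he) (Or.inr rfl)
    exact hL.fst_ne_snd hc he
  have h2 : ∃ c ∈ L, c.2 = d.2 := ⟨d, hd, rfl⟩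
  rw [applyLayer, dif_neg h1, dif_pos h2,
    hL.eq_of_touch h2.choose_spec.1 hd (Or.inr h2.choose_spec.2) (Or.inr rfl)]

lemma applyLayer_of_not_usedIn {k : Fin n} (hk : ¬ usedIn L k) (x : Fin n → Bool) :
    applyLayer L x k = x k := by
  simp only [usedIn, not_exists, not_and, not_or] at hk
  rw [applyLayer, dif_neg fun ⟨c, hc, h⟩ => (hk c hc).1 h,
    dif_neg fun ⟨c, hc, h⟩ => (hk c hc).2 h]

lemma sortedOn_applyLayer (hL : IsLayer L) (x : Fin n → Bool) : SortedOn L (applyLayer L x) := by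
  intro d hd
  rw [applyLayer_fst hL hd, applyLayer_snd hL hd]
  cases x d.1 <;> cases x d.2 <;> decide

lemma applyLayer_eq_self (hL : IsLayer L) {x : Fin n → Bool} (hx : SortedOn L x) :
    applyLayer L x = x := by
  funext k
  by_cases hk : usedIn L k
  · obtain ⟨d, hd, rfl | rfl⟩ := hk <;> have hle := hx d hd
    · rw [applyLayer_fst hL hd]
      revert hle; cases x d.1 <;> cases x d.2 <;> decide
    · rw [applyLayer_snd hL hd]
      revert hle; cases x d.1 <;> cases x d.2 <;> decide
  · exact applyLayer_of_not_usedIn hk x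

lemma applyLayer_erase (hL : IsLayer L) {c : Comp n} (hc : c ∈ L) {x : Fin n → Bool}
    (hx : x c.1 ≤ x c.2) : applyLayer (L.erase c) x = applyLayer L x := by
  have hL' : IsLayer (L.erase c) := hL.mono (Finset.erase_subset c L)
  funext k
  by_cases hk : usedIn (L.erase c) k
  · obtain ⟨d, hd, rfl | rfl⟩ := hk
    · rw [applyLayer_fst hL' hd, applyLayer_fst hL (Finset.mem_of_mem_erase hd)]
    · rw [applyLayer_snd hL' hd, applyLayer_snd hL (Finset.mem_of_mem_erase hd)]
  · rw [applyLayer_of_not_usedIn hk]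
    by_cases hkc : c.1 = k ∨ c.2 = k
    · rcases hkc with rfl | rfl
      · rw [applyLayer_fst hL hc]
        revert hx; cases x c.1 <;> cases x c.2 <;> decide
      · rw [applyLayer_snd hL hc]
        revert hx; cases x c.1 <;> cases x c.2 <;> decide
    · refine (applyLayer_of_not_usedIn (fun ⟨d, hd, hdk⟩ => hk ⟨d, ?_, hdk⟩) x).symm
      exact Finset.mem_erase.mpr ⟨by rintro rfl; exact hkc hdk, hd⟩

end applyLayer

section block

variable {S : Layer n}

lemma mem_block_self (S : Layer n) (m : Fin n) : m ∈ block S m := Or.inl rfl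

lemma block_eq_pair (hS : IsLayer S) {d : Comp n} (hd : d ∈ S) {m : Fin n}
    (hm : d.1 = m ∨ d.2 = m) : block S m = {d.1, d.2} := by
  ext p
  simp only [block, Joined, Set.mem_ofPred_eq, Set.mem_insert_iff, Set.mem_singleton_iff]
  constructor
  · rintro (rfl | h | h)
    · tauto
    · have := hS.eq_of_touch h hd (Or.inl rfl) hm
      subst this; tauto
    · have := hS.eq_of_touch h hd (Or.inr rfl) hm
      subst this; tauto
  · rcases hm with rfl | rfl <;> rintro (rfl | rfl) <;> simp [hd]

lemma block_eq_singleton {m : Fin n} (hm : ¬ usedIn S m) : block S m = {m} := by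
  ext p
  simp only [block, Joined, Set.mem_ofPred_eq, Set.mem_singleton_iff, or_iff_left_iff_imp]
  rintro (h | h)
  exacts [absurd ⟨_, h, Or.inl rfl⟩ hm, absurd ⟨_, h, Or.inr rfl⟩ hm]

lemma block_eq_of_mem (hS : IsLayer S) {m p : Fin n} (hp : p ∈ block S m) :
    block S p = block S m := by
  by_cases hm : usedIn S m
  · obtain ⟨d, hd, hdm⟩ := hm
    rw [block_eq_pair hS hd hdm] at hp ⊢
    exact block_eq_pair hS hd (hp.imp Eq.symm (fun h => (Set.mem_singleton_iff.mp h).symm))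
  · rw [block_eq_singleton hm] at hp
    rw [Set.mem_singleton_iff.mp hp]

lemma mem_block_comm (hS : IsLayer S) {m p : Fin n} : p ∈ block S m ↔ m ∈ block S p :=
  ⟨fun h => block_eq_of_mem hS h ▸ mem_block_self S m,
    fun h => block_eq_of_mem hS h ▸ mem_block_self S p⟩

lemma notMem_block_of_mem_block (hS : IsLayer S) {m m' p : Fin n} (hp : p ∈ block S m)
    (hm : m ∉ block S m') : p ∉ block S m' := by
  intro hp'
  rw [← block_eq_of_mem hS hp', block_eq_of_mem hS hp] at hm
  exact hm (mem_block_self S m)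

/-- A layer acts on each block as a single comparator or as the identity. -/
lemma forall_block_applyLayer_eq_iff (hS : IsLayer S) (y : Fin n → Bool) (m : Fin n)
    (b : Bool) : (∀ p ∈ block S m, applyLayer S y p = b) ↔ ∀ p ∈ block S m, y p = b := by
  by_cases hm : usedIn S m
  · obtain ⟨d, hd, hdm⟩ := hm
    simp only [block_eq_pair hS hd hdm, Set.forall_mem_insert, Set.mem_singleton_iff,
      forall_eq, applyLayer_fst hS hd, applyLayer_snd hS hd]
    cases b <;> cases y d.1 <;> cases y d.2 <;> decide
  · simp only [block_eq_singleton hm, Set.mem_singleton_iff, forall_eq,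
      applyLayer_of_not_usedIn hm]

lemma forall_block_eq_iff_of_applyLayer_eq (hS : IsLayer S) {y y' : Fin n → Bool}
    (h : applyLayer S y' = applyLayer S y) (m : Fin n) (b : Bool) :
    (∀ p ∈ block S m, y' p = b) ↔ ∀ p ∈ block S m, y p = b := by
  rw [← forall_block_applyLayer_eq_iff hS y', h, forall_block_applyLayer_eq_iff hS]

lemma block_eq_of_joined (hS : IsLayer S) {m p : Fin n} (h : Joined S m p) :
    block S m = {m, p} := by
  rcases h with h | h
  · exact block_eq_pair hS h (Or.inl rfl)
  · rw [block_eq_pair hS h (Or.inr rfl), Set.pair_comm]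

lemma snd_notMem_block_fst {L1 : Layer n} (hL1 : IsLayer L1) (hS : IsLayer S) {c : Comp n}
    (hc : c ∈ L1) (hcS : c ∉ S) : c.2 ∉ block S c.1 := by
  rintro (h | h | h)
  · exact hL1.fst_ne_snd hc h.symm
  · exact hcS h
  · exact (hS.1 _ h).not_gt (hL1.1 c hc)

end block

section permSet

lemma permSet_one (X : Set (Fin n → Bool)) : permSet 1 X = X :=
  Set.image_id X

lemma permSet_mul (σ π : Equiv.Perm (Fin n)) (X : Set (Fin n → Bool)) :
    permSet σ (permSet π X) = permSet (σ * π) X := by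
  rw [permSet, permSet, permSet, Set.image_image]
  rfl

lemma ncard_permSet (π : Equiv.Perm (Fin n)) (X : Set (Fin n → Bool)) :
    (permSet π X).ncard = X.ncard :=
  Set.ncard_image_of_injective X fun x y h => funext fun k => by
    simpa [permVec] using congrFun h (π k)

end permSet

section outputs

variable {L1 S : Layer n}

lemma outputs_pair_eq_image (hL1 : IsLayer L1) (S : Layer n) :
    outputs [L1, S] = applyLayer S '' {y | SortedOn L1 y} := by
  ext z
  constructor
  · rintro ⟨x, rfl⟩
    exact ⟨applyLayer L1 x, sortedOn_applyLayer hL1 x, rfl⟩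
  · rintro ⟨y, hy, rfl⟩
    exact ⟨y, congrArg (applyLayer S) (applyLayer_eq_self hL1 hy)⟩

lemma outputs_erase_eq_of_mem (hL1 : IsLayer L1) (hS : IsLayer S) {c : Comp n} (hc1 : c ∈ L1)
    (hcS : c ∈ S) : outputs [L1, S.erase c] = outputs [L1, S] := by
  rw [outputs_pair_eq_image hL1, outputs_pair_eq_image hL1]
  exact Set.image_congr fun y hy => applyLayer_erase hS hcS (hy c hc1)

lemma applyLayer_notMem_outputs_of_inverted (hL1 : IsLayer L1) (hS : IsLayer S) {c : Comp n}
    (hc : c ∈ L1) {y : Fin n → Bool} (h1 : ∀ p ∈ block S c.1, y p = true)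
    (h2 : ∀ p ∈ block S c.2, y p = false) : applyLayer S y ∉ outputs [L1, S] := by
  rw [outputs_pair_eq_image hL1]
  rintro ⟨y', hy', hSy⟩
  have hy'1 := (forall_block_eq_iff_of_applyLayer_eq hS hSy _ _).2 h1 c.1 (mem_block_self S _)
  have hy'2 := (forall_block_eq_iff_of_applyLayer_eq hS hSy _ _).2 h2 c.2 (mem_block_self S _)
  have hsorted := hy' c hc
  rw [hy'1, hy'2] at hsorted
  exact absurd hsorted (by decide)

lemma applyLayer_notMem_outputs_of_joined (hL1 : IsLayer L1) (hS : IsLayer S) {c e : Comp n}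
    (hc : c ∈ L1) (he : e ∈ L1) (hce : Joined S c.1 e.1) {y : Fin n → Bool}
    (hc2 : ∀ p ∈ block S c.2, y p = false) (he2 : ∀ p ∈ block S e.2, y p = false)
    (hc1 : y c.1 = true) : applyLayer S y ∉ outputs [L1, S] := by
  rw [outputs_pair_eq_image hL1]
  rintro ⟨y', hy', hSy⟩
  have hfst : ∀ d ∈ L1, (∀ p ∈ block S d.2, y p = false) → y' d.1 = false := by
    intro d hd h
    have hd2 := (forall_block_eq_iff_of_applyLayer_eq hS hSy _ _).2 h d.2 (mem_block_self S _)
    exact Bool.eq_false_of_le_false (hd2 ▸ hy' d hd)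
  have hblock : ∀ p ∈ block S c.1, y' p = false := by
    rw [block_eq_of_joined hS hce]
    rintro p (rfl | rfl)
    exacts [hfst c hc hc2, hfst e he he2]
  simpa [hc1] using (forall_block_eq_iff_of_applyLayer_eq hS hSy _ _).1 hblock c.1
    (mem_block_self S _)

end outputs

/-- Removing a first-layer comparator `c = (i, j)` that the second layer does not repeat lets
through a vector that `c` would have forbidden: if `i`'s partner in `S` is a min-channel of `L1`,
the unit vector at `i`, otherwise the indicator of `i`'s block. -/
lemma outputs_ssubset_outputs_erase {L1 S : Layer n} (hL1 : IsLayer L1) (hS : IsLayer S)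
    {c : Comp n} (hc : c ∈ L1) (hcS : c ∉ S) : outputs [L1, S] ⊂ outputs [L1.erase c, S] := by
  have hL1' := hL1.mono (Finset.erase_subset c L1)
  have hsorted : ∀ y : Fin n → Bool, (∀ e ∈ L1, e ≠ c → y e.1 = false) →
      SortedOn (L1.erase c) y := fun y h e he => by
    rw [h e (Finset.mem_of_mem_erase he) (Finset.ne_of_mem_erase he)]
    exact Bool.false_le _
  have hc21 := snd_notMem_block_fst hL1 hS hc hcS
  have hc12 : c.1 ∉ block S c.2 := fun h => hc21 ((mem_block_comm hS).1 h)
  refine (Set.ssubset_iff_of_subset ?_).2 ?_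
  · rw [outputs_pair_eq_image hL1, outputs_pair_eq_image hL1']
    exact Set.image_mono fun y hy e he => hy e (Finset.mem_of_mem_erase he)
  rw [outputs_pair_eq_image hL1']
  by_cases hk : ∃ e ∈ L1, Joined S c.1 e.1
  · obtain ⟨e, he, hce⟩ := hk
    have hec : e ≠ c := by
      rintro rfl
      exact lt_irrefl _ (hS.1 _ (hce.elim id id))
    let u : Fin n → Bool := fun k => decide (k = c.1)
    refine ⟨applyLayer S u, ⟨u, hsorted u ?_, rfl⟩,
      applyLayer_notMem_outputs_of_joined hL1 hS hc he hce ?_ ?_ (decide_eq_true rfl)⟩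
    · exact fun e' he' hne =>
        decide_eq_false fun h => hne (hL1.eq_of_touch he' hc (Or.inl h) (Or.inl rfl))
    · exact fun p hp => decide_eq_false (by rintro rfl; exact hc12 hp)
    · refine fun p hp => decide_eq_false ?_
      rintro rfl
      have he2 : e.2 ∈ ({c.1, e.1} : Set (Fin n)) :=
        block_eq_of_joined hS hce ▸ (mem_block_comm hS).1 hp
      rcases he2 with h | h
      · exact hec (hL1.eq_of_touch he hc (Or.inr h) (Or.inl rfl))
      · exact hL1.fst_ne_snd he h.symm
  · push Not at hk
    let u : Fin n → Bool := fun k => decide (k ∈ block S c.1)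
    refine ⟨applyLayer S u, ⟨u, hsorted u ?_, rfl⟩,
      applyLayer_notMem_outputs_of_inverted hL1 hS hc (fun p hp => decide_eq_true hp)
        (fun p hp => decide_eq_false (notMem_block_of_mem_block hS hp hc21))⟩
    refine fun e he hne => decide_eq_false ?_
    rintro (h | h)
    exacts [hne (hL1.eq_of_touch he hc (Or.inl h) (Or.inl rfl)), hk e he h]

lemma saturated_of_minimal {L1 S : Layer n} (hL1 : IsLayer L1) (hS : IsLayer S)
    (hmin : ∀ (T : Layer n) (σ : Equiv.Perm (Fin n)), IsLayer T →
      outputs [L1, T] ⊆ permSet σ (outputs [L1, S]) →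
      ¬ toLex ((outputs [L1, T]).ncard, T.card) < toLex ((outputs [L1, S]).ncard, S.card)) :
    Saturated L1 S := by
  have hfin (X : Set (Fin n → Bool)) : X.Finite := X.toFinite
  refine ⟨?_, ?_⟩
  · rintro ⟨σ, ⟨c, hc, heq⟩ | ⟨c, hc, heq⟩⟩
    · by_cases hcS : c ∈ S
      · have hout := outputs_erase_eq_of_mem hL1 hS hc hcS
        refine hmin _ 1 (hS.mono (Finset.erase_subset c S)) (by rw [hout, permSet_one])
          (Prod.Lex.toLex_lt_toLex.2 (Or.inr ⟨?_, Finset.card_erase_lt_of_mem hcS⟩))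
        rw [hout]
      · have hlt := Set.ncard_lt_ncard (outputs_ssubset_outputs_erase hL1 hS hc hcS) (hfin _)
        rw [heq, ncard_permSet] at hlt
        exact hlt.false
    · refine hmin _ σ (hS.mono (Finset.erase_subset c S)) heq.subset
        (Prod.Lex.toLex_lt_toLex.2 (Or.inr ⟨?_, Finset.card_erase_lt_of_mem hc⟩))
      rw [heq, ncard_permSet]
  · rintro ⟨c, σ, hc, hc1, hc2, hlt⟩
    refine hmin _ σ (hS.insert hc hc1 hc2) hlt.subset (Prod.Lex.toLex_lt_toLex.2 (Or.inl ?_))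
    simpa only [ncard_permSet] using Set.ncard_lt_ncard hlt (hfin _)

theorem saturate_two_layers_general {n : ℕ} (L1 L2 : Layer n)
    (h1 : IsLayer L1) (h2 : IsLayer L2) :
    ∃ (S : Layer n) (π : Equiv.Perm (Fin n)),
      IsLayer S ∧
      outputs [L1, S] ⊆ permSet π (outputs [L1, L2]) ∧
      Saturated L1 S := by
  let P (T : Layer n) : Prop :=
    IsLayer T ∧ ∃ π : Equiv.Perm (Fin n), outputs [L1, T] ⊆ permSet π (outputs [L1, L2])
  have hP2 : L2 ∈ Finset.univ.filter P :=
    Finset.mem_filter.mpr ⟨Finset.mem_univ _, h2, 1, (permSet_one _).superset⟩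
  obtain ⟨S, hSP, hSmin⟩ := Finset.exists_min_image (Finset.univ.filter P)
    (fun T => toLex ((outputs [L1, T]).ncard, T.card)) ⟨L2, hP2⟩
  obtain ⟨hS, π, hSπ⟩ := (Finset.mem_filter.mp hSP).2
  refine ⟨S, π, hS, hSπ,
    saturated_of_minimal h1 hS fun T σ hT hTσ => not_lt.mpr (hSmin T ?_)⟩
  refine Finset.mem_filter.mpr ⟨Finset.mem_univ _, hT, σ * π, hTσ.trans ?_⟩
  rw [← permSet_mul]
  exact Set.image_mono hSπ

/-- for any maximal layer `L1` and layer `L2` there are a layer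
`S` and a permutation `π` with `outputs(L1;S) ⊆ π(outputs(L1;L2))` and `L1;S`
saturated. -/
theorem saturate_two_layers {n : ℕ} (L1 L2 : Layer n)
    (h1 : IsLayer L1) (hmax : L1.card = n / 2) (h2 : IsLayer L2) :
    ∃ (S : Layer n) (π : Equiv.Perm (Fin n)),
      IsLayer S ∧
      outputs [L1, S] ⊆ permSet π (outputs [L1, L2]) ∧
      Saturated L1 S :=
  saturate_two_layers_general L1 L2 h1 h2

end SN
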